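/- Let (f, g, h) be a Darboux triple on S with both f and g immersions, and let h* : S → ℝ³ satisfy df = h* × dg. Then h* · h = −1 and h* · df = 0 identically on S. -/

import Mathlib

open Matrix

lemma cross_cross' (u v w : Fin 3 → ℝ) :
    u ⨯₃ (v ⨯₃ w) = (u ⬝ᵥ w) • v - (u ⬝ᵥ v) • w := by
  ext i
  fin_cases i <;>
    simp [crossProduct, dotProduct, Fin.sum_univ_succ] <;> ring

theorem darboux_stmt5
    (f g h hstar : (Fin 2 → ℝ) → (Fin 3 → ℝ))
    (hf : ContDiff ℝ (⊤ : ℕ∞) f) (hg : ContDiff ℝ (⊤ : ℕ∞) g) (hh : ContDiff ℝ (⊤ : ℕ∞) h)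
    (himmf : ∀ p, Function.Injective (fderiv ℝ f p))
    (himmg : ∀ p, Function.Injective (fderiv ℝ g p))
    (hdarboux : ∀ p (v : Fin 2 → ℝ), fderiv ℝ g p v = h p ⨯₃ fderiv ℝ f p v)
    (hstar_def : ∀ p (v : Fin 2 → ℝ), fderiv ℝ f p v = hstar p ⨯₃ fderiv ℝ g p v) :
    ∀ p, hstar p ⬝ᵥ h p = -1 ∧ ∀ v : Fin 2 → ℝ, hstar p ⬝ᵥ fderiv ℝ f p v = 0 := by
  intro p
  have key : ∀ v : Fin 2 → ℝ, (1 + hstar p ⬝ᵥ h p) • fderiv ℝ f p v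
      = (hstar p ⬝ᵥ fderiv ℝ f p v) • h p := by
    intro v
    have h1 := hstar_def p v
    rw [hdarboux p v, cross_cross'] at h1
    rw [add_smul, one_smul]
    linear_combination (norm := module) h1
  have hH : h p ≠ 0 := by
    intro hH0
    have h1 : fderiv ℝ g p ![1,0] = 0 := by
      rw [hdarboux p ![1,0], hH0]; simp [crossProduct]
    have h2 := (himmg p) (a₁ := ![1,0]) (a₂ := 0) (by simpa using h1)
    have h3 : (1:ℝ) = 0 := congrFun h2 0
    norm_num at h3
  have hc : 1 + hstar p ⬝ᵥ h p = 0 := by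
    by_contra hc
    set c : ℝ := 1 + hstar p ⬝ᵥ h p with hcdef
    have a0 : fderiv ℝ f p ![1,0] = (c⁻¹ * (hstar p ⬝ᵥ fderiv ℝ f p ![1,0])) • h p := by
      rw [← smul_smul, ← key ![1,0], smul_smul, inv_mul_cancel₀ hc, one_smul]
    have a1 : fderiv ℝ f p ![0,1] = (c⁻¹ * (hstar p ⬝ᵥ fderiv ℝ f p ![0,1])) • h p := by
      rw [← smul_smul, ← key ![0,1], smul_smul, inv_mul_cancel₀ hc, one_smul]
    set d0 : ℝ := c⁻¹ * (hstar p ⬝ᵥ fderiv ℝ f p ![1,0]) with hd0def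
    set d1 : ℝ := c⁻¹ * (hstar p ⬝ᵥ fderiv ℝ f p ![0,1]) with hd1def
    have hcomb : fderiv ℝ f p (d1 • ![1,0] - d0 • ![0,1]) = 0 := by
      rw [map_sub, ContinuousLinearMap.map_smul, ContinuousLinearMap.map_smul, a0, a1,
        smul_smul, smul_smul, mul_comm d1 d0, sub_self]
    have hv : (d1 • ![(1:ℝ),0] - d0 • ![0,1]) = 0 :=
      himmf p (by simpa using hcomb)
    have hd1 : d1 = 0 := by simpa using congrFun hv 0
    have hd0 : d0 = 0 := by simpa using congrFun hv 1
    have hA0 : fderiv ℝ f p ![1,0] = 0 := by rw [a0, hd0, zero_smul]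
    have h2 := himmf p (a₁ := ![1,0]) (a₂ := 0) (by simpa using hA0)
    have h3 : (1:ℝ) = 0 := congrFun h2 0
    norm_num at h3
  refine ⟨by linarith, fun v => ?_⟩
  have h1 := key v
  rw [hc, zero_smul] at h1
  rcases smul_eq_zero.mp h1.symm with h2 | h2
  · exact h2
  · exact absurd h2 hH
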